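/- arXiv:2510.14475 — 12 statements merged into one kernel-verified Lean document; each statement's English description precedes it below -/
import Mathlib

section
/- Let W be a vector space over 𝔽₂ = ZMod 2, let t ≤ n, and let f(k,x) = g₁(x) + g₂(x + α(k)) be an XOR-type function, where g₁, g₂ : 𝔽₂^{n−t} × 𝔽₂^{t} → W are arbitrary functions and α : K → 𝔽₂^{n−t} × 𝔽₂^{t}. Suppose there exist k₀ ∈ K and a nonzero period s = (s^l, s^r) ∈ 𝔽₂^{n−t} × 𝔽₂^{t} such that f(k₀, x + s) = f(k₀, x) for all x. Define F^L(k, y) = ∑_{u ∈ 𝔽₂^{t}} f(k, (y, u)) for y ∈ 𝔽₂^{n−t}. Then for every k ∈ K whose secret state agrees with that of k₀ in the high n−t bits (i.e. the first component of α(k) equals the first component of α(k₀)), the function F^L(k, ·) has period s^l: F^L(k, y + s^l) = F^L(k, y) for all y ∈ 𝔽₂^{n−t}. -/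
/-! Summing over the low bits turns a translate `x ↦ g (x + c)` into the translate by `c.1` of
the fiber sum of `g`, since `u ↦ u + c.2` permutes the low bits. Hence the fiber sum of `f k` is
`A y + B (y + (α k).1)` with `A`, `B` independent of `k`: it depends on `k` only through the high
bits of the secret state, and it inherits the period `s.1` from the period `s` of `f k₀`. -/

section FiberSum

variable {A B W : Type*} [AddCommMonoid W]

def fiberSum [Fintype B] (g : A × B → W) (a : A) : W :=
  ∑ b, g (a, b)

variable [Add A] [AddGroup B] [Fintype B]

theorem fiberSum_comp_add_right (g : A × B → W) (c : A × B) (a : A) :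
    fiberSum (fun x => g (x + c)) a = fiberSum g (a + c.1) :=
  Equiv.sum_comp (Equiv.addRight c.2) fun b => g (a + c.1, b)

theorem fiberSum_add_right_of_periodic {g : A × B → W} {s : A × B}
    (hg : ∀ x, g (x + s) = g x) (a : A) : fiberSum g (a + s.1) = fiberSum g a := by
  rw [← fiberSum_comp_add_right]
  simp only [hg]

theorem fiberSum_add_comp_add_right (g₁ g₂ : A × B → W) (c : A × B) (a : A) :
    fiberSum (fun x => g₁ x + g₂ (x + c)) a = fiberSum g₁ a + fiberSum g₂ (a + c.1) := by
  rw [← fiberSum_comp_add_right g₂]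
  exact Finset.sum_add_distrib

end FiberSum

theorem truncated_xor_type_has_truncated_period_general
    {n t : ℕ}
    {W : Type*} [AddCommGroup W]
    {K : Type*}
    (g₁ g₂ : (Fin (n - t) → ZMod 2) × (Fin t → ZMod 2) → W)
    (α : K → (Fin (n - t) → ZMod 2) × (Fin t → ZMod 2))
    (f : K → (Fin (n - t) → ZMod 2) × (Fin t → ZMod 2) → W)
    (hf : ∀ k x, f k x = g₁ x + g₂ (x + α k))
    (k₀ : K) (s : (Fin (n - t) → ZMod 2) × (Fin t → ZMod 2))
    (hper : ∀ x, f k₀ (x + s) = f k₀ x)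
    (F : K → (Fin (n - t) → ZMod 2) → W)
    (hF : ∀ k y, F k y = ∑ u : Fin t → ZMod 2, f k (y, u)) :
    ∀ k : K, (α k).1 = (α k₀).1 →
      ∀ y : Fin (n - t) → ZMod 2, F k (y + s.1) = F k y := by
  intro k hk y
  have hF_eq : ∀ k, F k = fiberSum (f k) := fun k => funext (hF k)
  have hF_split : ∀ k z, F k z = fiberSum g₁ z + fiberSum g₂ (z + (α k).1) := by
    intro k z
    rw [hF, ← fiberSum_add_comp_add_right]
    simp only [hf, fiberSum]
  have hF_k : F k = F k₀ := funext fun z => by rw [hF_split, hF_split, hk]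
  rw [hF_k, hF_eq]
  exact fiberSum_add_right_of_periodic hper y

/-- Property 1: if the XOR-type function `f(k, x) = g₁(x) + g₂(x + α(k))`
has a nonzero period `s = (s^l, s^r)` at `k = k₀`, then for every index `k`
whose secret state agrees with that of `k₀` in the high `n - t` bits, the
truncated function `F^L(k, y) = ∑_{u ∈ 𝔽₂^t} f(k, (y, u))` has period `s^l`. -/
theorem truncated_xor_type_has_truncated_period
    {n t : ℕ} (ht : t ≤ n)
    {W : Type*} [AddCommGroup W] [Module (ZMod 2) W]
    {K : Type*}
    (g₁ g₂ : (Fin (n - t) → ZMod 2) × (Fin t → ZMod 2) → W)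
    (α : K → (Fin (n - t) → ZMod 2) × (Fin t → ZMod 2))
    (f : K → (Fin (n - t) → ZMod 2) × (Fin t → ZMod 2) → W)
    (hf : ∀ k x, f k x = g₁ x + g₂ (x + α k))
    (k₀ : K) (s : (Fin (n - t) → ZMod 2) × (Fin t → ZMod 2))
    (hs : s ≠ 0)
    (hper : ∀ x, f k₀ (x + s) = f k₀ x)
    (F : K → (Fin (n - t) → ZMod 2) → W)
    (hF : ∀ k y, F k y = ∑ u : Fin t → ZMod 2, f k (y, u)) :
    ∀ k : K, (α k).1 = (α k₀).1 →
      ∀ y : Fin (n - t) → ZMod 2, F k (y + s.1) = F k y :=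
  truncated_xor_type_has_truncated_period_general g₁ g₂ α f hf k₀ s hper F hF
end

section
/- Let 𝔽 be a field of characteristic 2, W an 𝔽₂-vector space, E₂, E₄ : 𝔽 → W arbitrary functions, k₁, k₃ ∈ 𝔽, and β₀, β₁ ∈ 𝔽 with β₀ ≠ β₁. Define PolyMAC(m₁, m₂) = E₂(k₁²m₁ + k₁m₂) + E₄(k₃²m₁ + k₃m₂) and f(α, x) = PolyMAC(β₀, x) + PolyMAC(β₁, x + α). Set s = (k₁ + k₃)(β₀ + β₁). If α = k₁(β₀ + β₁) or α = k₃(β₀ + β₁), then f(α, ·) has period s, i.e. f(α, x + s) = f(α, x) for every x ∈ 𝔽. -/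
/-!
In characteristic 2 the message `(β₀, x)` and the message `(β₁, x + k (β₀ + β₁))` collide under
the polynomial hash with key `k`. So for `α = k₁ (β₀ + β₁)` the two `E₂`-terms of `f(α, x)` cancel,
while the shift by `s` exchanges the two `E₄`-terms; symmetrically for `α = k₃ (β₀ + β₁)`.
-/

section CharTwo

variable {R : Type*} [CommRing R] [CharP R 2]

def polyHash (k m₁ m₂ : R) : R := k ^ 2 * m₁ + k * m₂

lemma polyHash_add_mul_add (k a b x : R) : polyHash k b (x + k * (a + b)) = polyHash k a x := by
  unfold polyHash
  linear_combination (k ^ 2 * b) * CharTwo.two_eq_zero (R := R)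

variable {W : Type*} [AddCommGroup W]

/-- The contribution of the block cipher `E` with hashing key `k` to `f(α, x)`. -/
def xorComponent (E : R → W) (k β₀ β₁ α x : R) : W :=
  E (polyHash k β₀ x) + E (polyHash k β₁ (x + α))

lemma xorComponent_mul_add_eq_zero [Module (ZMod 2) W] (E : R → W) (k β₀ β₁ : R) :
    xorComponent E k β₀ β₁ (k * (β₀ + β₁)) = 0 := by
  funext x
  rw [xorComponent, polyHash_add_mul_add, ZModModule.add_self, Pi.zero_apply]

lemma xorComponent_periodic (E : R → W) (k k' β₀ β₁ : R) :
    Function.Periodic (xorComponent E k β₀ β₁ (k' * (β₀ + β₁))) ((k + k') * (β₀ + β₁)) := by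
  intro x
  have h₀ : polyHash k β₀ (x + (k + k') * (β₀ + β₁)) = polyHash k β₁ (x + k' * (β₀ + β₁)) := by
    rw [← polyHash_add_mul_add k β₁ β₀]
    ring_nf
  have h₁ : polyHash k β₁ (x + (k + k') * (β₀ + β₁) + k' * (β₀ + β₁)) = polyHash k β₀ x := by
    rw [← polyHash_add_mul_add k β₀ β₁ x]
    congr 1
    linear_combination (k' * (β₀ + β₁)) * CharTwo.two_eq_zero (R := R)
  rw [xorComponent, xorComponent, h₀, h₁, add_comm]

end CharTwo

theorem polyMAC_xor_type_period_general
    {F : Type*} [Field F] [CharP F 2]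
    {W : Type*} [AddCommGroup W] [Module (ZMod 2) W]
    (E₂ E₄ : F → W) (k₁ k₃ : F) (β₀ β₁ : F)
    (PolyMAC : F → F → W)
    (hP : ∀ m₁ m₂, PolyMAC m₁ m₂ =
      E₂ (k₁ ^ 2 * m₁ + k₁ * m₂) + E₄ (k₃ ^ 2 * m₁ + k₃ * m₂))
    (f : F → F → W)
    (hf : ∀ α x, f α x = PolyMAC β₀ x + PolyMAC β₁ (x + α))
    (s : F) (hs : s = (k₁ + k₃) * (β₀ + β₁))
    (α : F) (hα : α = k₁ * (β₀ + β₁) ∨ α = k₃ * (β₀ + β₁)) :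
    ∀ x : F, f α (x + s) = f α x := by
  have hsplit : f α = xorComponent E₂ k₁ β₀ β₁ α + xorComponent E₄ k₃ β₀ β₁ α := by
    funext x
    simp only [hf, hP, Pi.add_apply, xorComponent, polyHash]
    abel
  rw [hsplit, hs]
  rcases hα with rfl | rfl
  · rw [xorComponent_mul_add_eq_zero, zero_add, add_comm k₁]
    exact xorComponent_periodic E₄ k₃ k₁ β₀ β₁
  · rw [xorComponent_mul_add_eq_zero, add_zero]
    exact xorComponent_periodic E₂ k₁ k₃ β₀ β₁

/-- The XOR-type function `f(α, x) = PolyMAC(β₀, x) + PolyMAC(β₁, x + α)` built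
from the two-block PolyMAC has period `s = (k₁ + k₃)(β₀ + β₁)` whenever
`α = k₁(β₀ + β₁)` or `α = k₃(β₀ + β₁)`. -/
theorem polyMAC_xor_type_period
    {F : Type*} [Field F] [CharP F 2]
    {W : Type*} [AddCommGroup W] [Module (ZMod 2) W]
    (E₂ E₄ : F → W) (k₁ k₃ : F) (β₀ β₁ : F) (hβ : β₀ ≠ β₁)
    (PolyMAC : F → F → W)
    (hP : ∀ m₁ m₂, PolyMAC m₁ m₂ =
      E₂ (k₁ ^ 2 * m₁ + k₁ * m₂) + E₄ (k₃ ^ 2 * m₁ + k₃ * m₂))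
    (f : F → F → W)
    (hf : ∀ α x, f α x = PolyMAC β₀ x + PolyMAC β₁ (x + α))
    (s : F) (hs : s = (k₁ + k₃) * (β₀ + β₁))
    (α : F) (hα : α = k₁ * (β₀ + β₁) ∨ α = k₃ * (β₀ + β₁)) :
    ∀ x : F, f α (x + s) = f α x :=
  polyMAC_xor_type_period_general E₂ E₄ k₁ k₃ β₀ β₁ PolyMAC hP f hf s hs α hα
end

section
/- Let 𝔽 be a finite field of characteristic 2, W an 𝔽₂-vector space, E₂, E₄ : 𝔽 → W arbitrary functions, k₁, k₃ ∈ 𝔽, and β₀, β₁ ∈ 𝔽 with β₀ ≠ β₁. Define PolyMAC(m₁, m₂) = E₂(k₁²m₁ + k₁m₂) + E₄(k₃²m₁ + k₃m₂) and f(α, x) = PolyMAC(β₀, x) + PolyMAC(β₁, x + α). Let L ⊆ 𝔽 be an 𝔽₂-linear subspace (the span of the low t bits), and write the period s = (k₁ + k₃)(β₀ + β₁) as s = s_U + s_L with s_L ∈ L. Then for any α ∈ 𝔽 with α + k₁(β₀ + β₁) ∈ L or α + k₃(β₀ + β₁) ∈ L, the truncated function F(y) = ∑_{u ∈ L} f(α,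 y + u) satisfies F(y + s_U) = F(y) for every y ∈ 𝔽. -/
/-!
Write `A x = E₂(k₁²β₀ + k₁x)` and `B x = E₄(k₃²β₀ + k₃x)`. In characteristic 2,
`k²β₁ + kx = k²β₀ + k(x + k(β₀ + β₁))`, so
`f(α, x) = A x + B x + A (x + a) + B (x + b)` with `a = α + k₁(β₀ + β₁)`,
`b = α + k₃(β₀ + β₁)` and `a + b = s`. Summing over `L` makes every function invariant
under translations by `L`; if `a ∈ L`, the two `A`-terms cancel and `F(y) = G(y) + G(y + s_U)`
for the `L`-sum `G` of `B`, which is `s_U`-periodic because `2 s_U = 0`.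
-/

open Function

section TruncatedSum

variable {R M W : Type*} [Ring R] [AddCommGroup M] [Module R M] [AddCommGroup W]

def truncSum (L : Submodule R M) [Fintype L] (g : M → W) (y : M) : W :=
  ∑ u : L, g (y + u)

variable {L : Submodule R M} [Fintype L]

theorem truncSum_add_of_mem (g : M → W) {l : M} (hl : l ∈ L) (y : M) :
    truncSum L g (y + l) = truncSum L g y :=
  Fintype.sum_equiv (Equiv.addRight ⟨l, hl⟩) _ _ fun u => by
    simp only [Equiv.coe_addRight, Submodule.coe_add]
    rw [add_assoc, add_comm l]

theorem truncSum_eq_add_truncSum_add [Module (ZMod 2) W] {g A B : M → W} {a b p : M}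
    (hg : ∀ x, g x = A x + B x + A (x + a) + B (x + b)) (ha : a ∈ L) (hab : a + b - p ∈ L)
    (y : M) : truncSum L g y = truncSum L B y + truncSum L B (y + p) := by
  have hA : truncSum L A (y + a) = truncSum L A y := truncSum_add_of_mem A ha y
  have hB : truncSum L B (y + b) = truncSum L B (y + p) := by
    rw [← truncSum_add_of_mem B (L.sub_mem hab ha) (y + p)]
    congr 1
    abel
  have hsplit : truncSum L g y = truncSum L A y + truncSum L B y
      + truncSum L A (y + a) + truncSum L B (y + b) := by
    simp only [truncSum, hg, Finset.sum_add_distrib, add_right_comm _ (_ : L).1]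
  rw [hsplit, hA, hB]
  calc _ = (truncSum L A y + truncSum L A y) + (truncSum L B y + truncSum L B (y + p)) := by
        abel
    _ = _ := by rw [ZModModule.add_self, zero_add]

theorem periodic_truncSum_of_mem [Module (ZMod 2) M] [Module (ZMod 2) W] {g A B : M → W}
    {a b p : M} (hg : ∀ x, g x = A x + B x + A (x + a) + B (x + b)) (hmem : a ∈ L ∨ b ∈ L)
    (hab : a + b - p ∈ L) : Periodic (truncSum L g) p := by
  obtain ⟨G, hG⟩ : ∃ G : M → W, ∀ y, truncSum L g y = G y + G (y + p) := by
    rcases hmem with ha | hb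
    · exact ⟨_, truncSum_eq_add_truncSum_add hg ha hab⟩
    · refine ⟨_, truncSum_eq_add_truncSum_add (A := B) (B := A) (b := a) (fun x => ?_) hb ?_⟩
      · rw [hg]; abel
      · rwa [add_comm b]
  intro y
  rw [hG, hG, add_assoc y, ZModModule.add_self, add_zero, add_comm]

end TruncatedSum

theorem polyMAC_truncated_xor_type_period_general
    {F : Type*} [Field F] [Fintype F] [CharP F 2]
    [Module (ZMod 2) F]
    {W : Type*} [AddCommGroup W] [Module (ZMod 2) W]
    (E₂ E₄ : F → W) (k₁ k₃ : F) (β₀ β₁ : F)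
    (PolyMAC : F → F → W)
    (hP : ∀ m₁ m₂, PolyMAC m₁ m₂ =
      E₂ (k₁ ^ 2 * m₁ + k₁ * m₂) + E₄ (k₃ ^ 2 * m₁ + k₃ * m₂))
    (f : F → F → W)
    (hf : ∀ α x, f α x = PolyMAC β₀ x + PolyMAC β₁ (x + α))
    (L : Submodule (ZMod 2) F) [DecidablePred (· ∈ L)]
    (s sU sL : F) (hs : s = (k₁ + k₃) * (β₀ + β₁))
    (hsplit : s = sU + sL) (hsL : sL ∈ L)
    (α : F) (hα : α + k₁ * (β₀ + β₁) ∈ L ∨ α + k₃ * (β₀ + β₁) ∈ L)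
    (Ftr : F → W)
    (hFtr : ∀ y, Ftr y = ∑ u : L, f α (y + (u : F))) :
    ∀ y : F, Ftr (y + sU) = Ftr y := by
  have h2 : (2 : F) = 0 := CharTwo.two_eq_zero
  have hshift (k x : F) : k ^ 2 * β₁ + k * x = k ^ 2 * β₀ + k * (x + k * (β₀ + β₁)) := by
    linear_combination (-(k ^ 2 * β₀)) * h2
  have hsum : α + k₁ * (β₀ + β₁) + (α + k₃ * (β₀ + β₁)) - sU = sL := by
    linear_combination α * h2 - hs + hsplit
  rw [show Ftr = truncSum L (f α) from funext hFtr]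
  refine periodic_truncSum_of_mem (A := fun x => E₂ (k₁ ^ 2 * β₀ + k₁ * x))
    (B := fun x => E₄ (k₃ ^ 2 * β₀ + k₃ * x)) (fun x => ?_) hα (hsum ▸ hsL)
  simp only [hf, hP, hshift, add_assoc]

/-- Truncated version of the PolyMAC attack: XOR-summing the XOR-type function
`f(α, x) = PolyMAC(β₀, x) + PolyMAC(β₁, x + α)` over an `𝔽₂`-subspace `L`
(the low `t` bits) yields a function with period `s_U`, the high part of
`s = (k₁ + k₃)(β₀ + β₁) = s_U + s_L` with `s_L ∈ L`, whenever the guess `α`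
matches `k₁(β₀ + β₁)` or `k₃(β₀ + β₁)` up to an element of `L`. -/
theorem polyMAC_truncated_xor_type_period
    {F : Type*} [Field F] [Fintype F] [CharP F 2]
    [Module (ZMod 2) F]
    {W : Type*} [AddCommGroup W] [Module (ZMod 2) W]
    (E₂ E₄ : F → W) (k₁ k₃ : F) (β₀ β₁ : F) (hβ : β₀ ≠ β₁)
    (PolyMAC : F → F → W)
    (hP : ∀ m₁ m₂, PolyMAC m₁ m₂ =
      E₂ (k₁ ^ 2 * m₁ + k₁ * m₂) + E₄ (k₃ ^ 2 * m₁ + k₃ * m₂))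
    (f : F → F → W)
    (hf : ∀ α x, f α x = PolyMAC β₀ x + PolyMAC β₁ (x + α))
    (L : Submodule (ZMod 2) F) [DecidablePred (· ∈ L)]
    (s sU sL : F) (hs : s = (k₁ + k₃) * (β₀ + β₁))
    (hsplit : s = sU + sL) (hsL : sL ∈ L)
    (α : F) (hα : α + k₁ * (β₀ + β₁) ∈ L ∨ α + k₃ * (β₀ + β₁) ∈ L)
    (Ftr : F → W)
    (hFtr : ∀ y, Ftr y = ∑ u : L, f α (y + (u : F))) :
    ∀ y : F, Ftr (y + sU) = Ftr y :=
  polyMAC_truncated_xor_type_period_general E₂ E₄ k₁ k₃ β₀ β₁ PolyMAC hP f hf L s sU sL hs hsplit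
    hsL α hα Ftr hFtr
end

section
/- Let V be an 𝔽₂-vector space, P₁, P₂ : V → V arbitrary functions, l₁₃, l₂₃ linear automorphisms of V, l₁₄, l₂₄, l₃₃, l₃₄ and e linear endomorphisms of V, C ∈ V, and k₁, k₂ ∈ V. Define g(x) = l₃₃(P₁(l₁₃(x) + l₁₄(k₁))) + l₃₄(P₂(l₂₃(x) + l₂₄(k₂))) + e(x) + C and f(i, x) = g(x) + e(x) + l₃₃(P₁(l₁₃(x))) + l₃₄(P₂(l₂₃(x + i))). Set s = l₁₃⁻¹(l₁₄(k₁)). If i = l₂₃⁻¹(l₂₄(k₂)) or i = l₂₃⁻¹(l₂₄(k₂)) + s, then f(i, ·) has period s, i.e. f(i, x + s) = f(i, x) for every x ∈ V. -/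
/-!
Over 𝔽₂ the two copies of `e x` cancel, and `f i` becomes the constant `C` plus two sums of the
shape `φ (L x) + φ (L x + L s)`, which are `s`-periodic because `L s + L s = 0`. For the
`P₁`-pair this is `l₁₃ s = l₁₄ k₁`; for the `P₂`-pair, `i = l₂₃⁻¹ (l₂₄ k₂)` makes its two
summands equal, so it vanishes, while `i = l₂₃⁻¹ (l₂₄ k₂) + s` puts it in the same shape.
-/

open Function

theorem add_self_eq_zero_of_module_zmod_two {V : Type*} [AddCommGroup V] [Module (ZMod 2) V]
    (v : V) : v + v = 0 := by
  rw [← two_smul (ZMod 2), show (2 : ZMod 2) = 0 from rfl, zero_smul]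

theorem periodic_add_comp_add_map {V W M F : Type*} [Add V] [AddMonoid W] [AddCommMagma M]
    [FunLike F V W] [AddHomClass F V W] (φ : W → M) (L : F) {s : V} (hs : L s + L s = 0) :
    Periodic (fun x => φ (L x) + φ (L x + L s)) s := fun x => by
  dsimp only
  rw [map_add, add_assoc (L x), hs, add_zero, add_comm]

/-- The p-XOR-type function built from a TPP-PRF
`g(x) = l₃₃(P₁(l₁₃(x) + l₁₄(k₁))) + l₃₄(P₂(l₂₃(x) + l₂₄(k₂))) + e(x) + C`,
namely `f(i, x) = g(x) + e(x) + l₃₃(P₁(l₁₃(x))) + l₃₄(P₂(l₂₃(x + i)))`,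
has period `s = l₁₃⁻¹(l₁₄(k₁))` when `i = l₂₃⁻¹(l₂₄(k₂))` or
`i = l₂₃⁻¹(l₂₄(k₂)) + s`. -/
theorem tpp_prf_p_xor_type_period
    {V : Type*} [AddCommGroup V] [Module (ZMod 2) V]
    (P₁ P₂ : V → V)
    (l₁₃ l₂₃ : V ≃ₗ[ZMod 2] V)
    (l₁₄ l₂₄ l₃₃ l₃₄ e : V →ₗ[ZMod 2] V)
    (C : V) (k₁ k₂ : V)
    (g : V → V)
    (hg : ∀ x, g x = l₃₃ (P₁ (l₁₃ x + l₁₄ k₁)) + l₃₄ (P₂ (l₂₃ x + l₂₄ k₂))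
      + e x + C)
    (f : V → V → V)
    (hf : ∀ i x, f i x = g x + e x + l₃₃ (P₁ (l₁₃ x)) + l₃₄ (P₂ (l₂₃ (x + i))))
    (s : V) (hs : s = l₁₃.symm (l₁₄ k₁))
    (i : V) (hi : i = l₂₃.symm (l₂₄ k₂) ∨ i = l₂₃.symm (l₂₄ k₂) + s) :
    ∀ x : V, f i (x + s) = f i x := by
  have hk₁ : l₁₄ k₁ = l₁₃ s := by rw [hs, LinearEquiv.apply_symm_apply]
  have normal_form : f i = (fun x => l₃₃ (P₁ (l₁₃ x)) + l₃₃ (P₁ (l₁₃ x + l₁₃ s)))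
      + (fun x => l₃₄ (P₂ (l₂₃ x + l₂₄ k₂)) + l₃₄ (P₂ (l₂₃ (x + i)))) + fun _ => C := by
    funext x
    rw [hf, hg, hk₁, Pi.add_apply, Pi.add_apply]
    linear_combination (norm := abel) add_self_eq_zero_of_module_zmod_two (e x)
  have first_pair : Periodic (fun x => l₃₃ (P₁ (l₁₃ x)) + l₃₃ (P₁ (l₁₃ x + l₁₃ s))) s :=
    periodic_add_comp_add_map (fun y => l₃₃ (P₁ y)) l₁₃ (add_self_eq_zero_of_module_zmod_two _)
  have second_pair :
      Periodic (fun x => l₃₄ (P₂ (l₂₃ x + l₂₄ k₂)) + l₃₄ (P₂ (l₂₃ (x + i)))) s := by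
    rcases hi with rfl | rfl
    · intro x
      simp only [map_add, LinearEquiv.apply_symm_apply, add_self_eq_zero_of_module_zmod_two]
    · convert periodic_add_comp_add_map (fun u => l₃₄ (P₂ (u + l₂₄ k₂))) l₂₃ (s := s)
        (add_self_eq_zero_of_module_zmod_two _) using 5 with x
      simp only [map_add, LinearEquiv.apply_symm_apply]
      abel
  rw [normal_form]
  exact (first_pair.add second_pair).add fun _ => rfl
end

section
/- Let V = V₁ × V₂ × V₃ with V₁ = 𝔽₂^p, V₂ = 𝔽₂^{n−t−p}, V₃ = 𝔽₂^{t}. Let P₁, P₂ : V → V be arbitrary functions, l₃₃, l₃₄ and e linear endomorphisms of V, C ∈ V, and k₁, k₂ ∈ V. Suppose l₁₃, l₂₃ are block-diagonal linear automorphisms of V (acting componentwise on the three factors, with each block invertible) and l₁₄, l₂₄ are block-diagonal linear endomorphisms of V. Define g(x) = l₃₃(P₁(l₁₃(x) + l₁₄(k₁))) + l₃₄(P₂(l₂₃(x) + l₂₄(k₂))) + e(x) + C, write s = l₁₃⁻¹(l₁₄(k₁)) = (s₁, s₂, s₃) and l₂₃⁻¹(l₂₄(k₂)) = (w₁, w₂,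 w₃), and for i = (i₁, i₂) ∈ V₁ × V₂, j ∈ V₂, y ∈ V₁ define F^L((i, j), y) = ∑_{u ∈ V₃} [ g(y, 0, u) + e(y, 0, u) + l₃₃(P₁(l₁₃(y, j, u))) + l₃₄(P₂(l₂₃((y, 0, u) + (i₁, i₂, 0)))) ]. If (i₁, i₂) = (w₁, w₂) and j = s₂, then F^L((i, j), ·) has period s₁: F^L((i, j), y + s₁) = F^L((i, j), y) for every y ∈ V₁. -/
/-!
Substituting the secret states into `g`, the summand of `F^L` at `(y, 0, u)` is
`Q₁(y + s₁, s₂, u + s₃) + Q₂(y + w₁, w₂, u + w₃) + C + Q₁(y, s₂, u) + Q₂(y + w₁, w₂, u)` with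
`Qᵢ = l₃ᵢ ∘ Pᵢ ∘ lᵢ₃`, the two copies of `e` cancelling in characteristic 2. Summing over all
`u ∈ V₃` absorbs the shifts `s₃` and `w₃`, so the `P₂`-terms cancel as well and
`F^L(y) = S(y + s₁) + S(y) + const` for the slice sum `S(y) = ∑ᵤ Q₁(y, s₂, u)`, which is
invariant under `y ↦ y + s₁` because `s₁ + s₁ = 0`.
-/

lemma periodic_add_comp_add_right {G M : Type*} [AddCommGroup G] [Module (ZMod 2) G]
    [AddCommMonoid M] (F : G → M) (s : G) (c : M) :
    Function.Periodic (fun y => F (y + s) + F y + c) s := fun y => by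
  simp only [add_assoc, ZModModule.add_self, add_zero, add_comm (F (y + s))]

section TruncatedSum

variable {V₁ V₂ V₃ W : Type*} [AddCommGroup V₁] [AddCommGroup V₂] [AddCommGroup V₃] [Fintype V₃]

lemma sum_slice_add [AddCommMonoid W] (Q : V₁ × V₂ × V₃ → W) (y a : V₁) (b : V₂) (c : V₃) :
    ∑ u : V₃, Q ((y, 0, u) + (a, b, c)) = ∑ u : V₃, Q (y + a, b, u) := by
  simp only [Prod.mk_add_mk, zero_add]
  exact Equiv.sum_comp (Equiv.addRight c) fun u => Q (y + a, b, u)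

lemma sum_truncated_eq [AddCommGroup W] [Module (ZMod 2) W] (Q₁ Q₂ E g : V₁ × V₂ × V₃ → W)
    (C : W) (s₁ w₁ : V₁) (s₂ w₂ : V₂) (s₃ w₃ : V₃)
    (hg : ∀ x, g x = Q₁ (x + (s₁, s₂, s₃)) + Q₂ (x + (w₁, w₂, w₃)) + E x + C) (y : V₁) :
    ∑ u : V₃, (g (y, 0, u) + E (y, 0, u) + Q₁ (y, s₂, u) + Q₂ ((y, 0, u) + (w₁, w₂, 0))) =
      ∑ u : V₃, Q₁ (y + s₁, s₂, u) + ∑ u : V₃, Q₁ (y, s₂, u) + ∑ _u : V₃, C := by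
  have hsummand : ∀ u : V₃,
      g (y, 0, u) + E (y, 0, u) + Q₁ (y, s₂, u) + Q₂ ((y, 0, u) + (w₁, w₂, 0)) =
        Q₁ ((y, 0, u) + (s₁, s₂, s₃)) + Q₁ (y, s₂, u) + C
          + (Q₂ ((y, 0, u) + (w₁, w₂, w₃)) + Q₂ ((y, 0, u) + (w₁, w₂, 0)))
          + (E (y, 0, u) + E (y, 0, u)) := fun u => by
    rw [hg]; abel
  simp only [hsummand, Finset.sum_add_distrib, sum_slice_add, ZModModule.add_self, add_zero]

end TruncatedSum

theorem tpp_prf_truncated_period_general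
    {n t p : ℕ}
    (P₁ P₂ : (Fin p → ZMod 2) × (Fin (n - t - p) → ZMod 2) × (Fin t → ZMod 2) →
      (Fin p → ZMod 2) × (Fin (n - t - p) → ZMod 2) × (Fin t → ZMod 2))
    (l₃₃ l₃₄ e :
      ((Fin p → ZMod 2) × (Fin (n - t - p) → ZMod 2) × (Fin t → ZMod 2)) →ₗ[ZMod 2]
      ((Fin p → ZMod 2) × (Fin (n - t - p) → ZMod 2) × (Fin t → ZMod 2)))
    (C k₁ k₂ : (Fin p → ZMod 2) × (Fin (n - t - p) → ZMod 2) × (Fin t → ZMod 2))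
    (l₁₃ : ((Fin p → ZMod 2) × (Fin (n - t - p) → ZMod 2) × (Fin t → ZMod 2)) ≃ₗ[ZMod 2]
      ((Fin p → ZMod 2) × (Fin (n - t - p) → ZMod 2) × (Fin t → ZMod 2)))
    (l₂₃ : ((Fin p → ZMod 2) × (Fin (n - t - p) → ZMod 2) × (Fin t → ZMod 2)) ≃ₗ[ZMod 2]
      ((Fin p → ZMod 2) × (Fin (n - t - p) → ZMod 2) × (Fin t → ZMod 2)))
    (l₁₄ : ((Fin p → ZMod 2) × (Fin (n - t - p) → ZMod 2) × (Fin t → ZMod 2)) →ₗ[ZMod 2]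
      ((Fin p → ZMod 2) × (Fin (n - t - p) → ZMod 2) × (Fin t → ZMod 2)))
    (l₂₄ : ((Fin p → ZMod 2) × (Fin (n - t - p) → ZMod 2) × (Fin t → ZMod 2)) →ₗ[ZMod 2]
      ((Fin p → ZMod 2) × (Fin (n - t - p) → ZMod 2) × (Fin t → ZMod 2)))
    -- the TPP-PRF `g`
    (g : (Fin p → ZMod 2) × (Fin (n - t - p) → ZMod 2) × (Fin t → ZMod 2) →
      (Fin p → ZMod 2) × (Fin (n - t - p) → ZMod 2) × (Fin t → ZMod 2))
    (hg : ∀ x, g x = l₃₃ (P₁ (l₁₃ x + l₁₄ k₁)) + l₃₄ (P₂ (l₂₃ x + l₂₄ k₂))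
      + e x + C)
    -- the components of the secret states
    (s₁ : Fin p → ZMod 2) (s₂ : Fin (n - t - p) → ZMod 2) (s₃ : Fin t → ZMod 2)
    (hs : l₁₃.symm (l₁₄ k₁) = (s₁, s₂, s₃))
    (w₁ : Fin p → ZMod 2) (w₂ : Fin (n - t - p) → ZMod 2) (w₃ : Fin t → ZMod 2)
    (hw : l₂₃.symm (l₂₄ k₂) = (w₁, w₂, w₃))
    -- the truncated attack function `F^L`
    (FL : ((Fin p → ZMod 2) × (Fin (n - t - p) → ZMod 2)) × (Fin (n - t - p) → ZMod 2) →
      (Fin p → ZMod 2) →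
      (Fin p → ZMod 2) × (Fin (n - t - p) → ZMod 2) × (Fin t → ZMod 2))
    (hFL : ∀ i₁ i₂ j y, FL ((i₁, i₂), j) y =
      ∑ u : Fin t → ZMod 2,
        (g (y, 0, u) + e (y, 0, u) + l₃₃ (P₁ (l₁₃ (y, j, u)))
          + l₃₄ (P₂ (l₂₃ ((y, (0 : Fin (n - t - p) → ZMod 2), u)
              + (i₁, i₂, (0 : Fin t → ZMod 2)))))))
    (i₁ : Fin p → ZMod 2) (i₂ j : Fin (n - t - p) → ZMod 2)
    (hi : i₁ = w₁ ∧ i₂ = w₂) (hj : j = s₂) :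
    ∀ y : Fin p → ZMod 2, FL ((i₁, i₂), j) (y + s₁) = FL ((i₁, i₂), j) y := by
  obtain ⟨rfl, rfl⟩ := hi
  subst hj
  have hk₁ : ∀ x, l₁₃ x + l₁₄ k₁ = l₁₃ (x + (s₁, j, s₃)) := fun x => by
    rw [map_add, ← hs, LinearEquiv.apply_symm_apply]
  have hk₂ : ∀ x, l₂₃ x + l₂₄ k₂ = l₂₃ (x + (i₁, i₂, w₃)) := fun x => by
    rw [map_add, ← hw, LinearEquiv.apply_symm_apply]
  have hFL' : FL ((i₁, i₂), j) = fun y =>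
      ∑ u : Fin t → ZMod 2, l₃₃ (P₁ (l₁₃ (y + s₁, j, u)))
        + ∑ u : Fin t → ZMod 2, l₃₃ (P₁ (l₁₃ (y, j, u))) + ∑ _u : Fin t → ZMod 2, C := by
    funext y
    rw [hFL]
    exact sum_truncated_eq (fun x => l₃₃ (P₁ (l₁₃ x))) (fun x => l₃₄ (P₂ (l₂₃ x))) e g C
      s₁ i₁ j i₂ s₃ w₃ (fun x => by rw [hg, hk₁, hk₂]) y
  rw [hFL']
  exact periodic_add_comp_add_right (fun y => ∑ u : Fin t → ZMod 2, l₃₃ (P₁ (l₁₃ (y, j, u))))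
    s₁ _

/-- Truncated attack function for a TPP-PRF with block-diagonal linear layers
`l₁₃, l₂₃` (automorphisms) and `l₁₄, l₂₄` (endomorphisms) on
`V = 𝔽₂^p × 𝔽₂^{n-t-p} × 𝔽₂^t`: writing `s = l₁₃⁻¹(l₁₄ k₁) = (s₁, s₂, s₃)` and
`l₂₃⁻¹(l₂₄ k₂) = (w₁, w₂, w₃)`, if the guesses satisfy `(i₁, i₂) = (w₁, w₂)`
and `j = s₂`, then `F^L((i, j), ·)` has period `s₁`. -/
theorem tpp_prf_truncated_period
    {n t p : ℕ}
    (P₁ P₂ : (Fin p → ZMod 2) × (Fin (n - t - p) → ZMod 2) × (Fin t → ZMod 2) →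
      (Fin p → ZMod 2) × (Fin (n - t - p) → ZMod 2) × (Fin t → ZMod 2))
    (l₃₃ l₃₄ e :
      ((Fin p → ZMod 2) × (Fin (n - t - p) → ZMod 2) × (Fin t → ZMod 2)) →ₗ[ZMod 2]
      ((Fin p → ZMod 2) × (Fin (n - t - p) → ZMod 2) × (Fin t → ZMod 2)))
    (C k₁ k₂ : (Fin p → ZMod 2) × (Fin (n - t - p) → ZMod 2) × (Fin t → ZMod 2))
    -- the block-diagonal automorphism `l₁₃` with blocks `a₁, a₂, a₃`
    (a₁ : (Fin p → ZMod 2) ≃ₗ[ZMod 2] (Fin p → ZMod 2))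
    (a₂ : (Fin (n - t - p) → ZMod 2) ≃ₗ[ZMod 2] (Fin (n - t - p) → ZMod 2))
    (a₃ : (Fin t → ZMod 2) ≃ₗ[ZMod 2] (Fin t → ZMod 2))
    (l₁₃ : ((Fin p → ZMod 2) × (Fin (n - t - p) → ZMod 2) × (Fin t → ZMod 2)) ≃ₗ[ZMod 2]
      ((Fin p → ZMod 2) × (Fin (n - t - p) → ZMod 2) × (Fin t → ZMod 2)))
    (hl₁₃ : ∀ x, l₁₃ x = (a₁ x.1, a₂ x.2.1, a₃ x.2.2))
    -- the block-diagonal automorphism `l₂₃` with blocks `b₁, b₂, b₃`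
    (b₁ : (Fin p → ZMod 2) ≃ₗ[ZMod 2] (Fin p → ZMod 2))
    (b₂ : (Fin (n - t - p) → ZMod 2) ≃ₗ[ZMod 2] (Fin (n - t - p) → ZMod 2))
    (b₃ : (Fin t → ZMod 2) ≃ₗ[ZMod 2] (Fin t → ZMod 2))
    (l₂₃ : ((Fin p → ZMod 2) × (Fin (n - t - p) → ZMod 2) × (Fin t → ZMod 2)) ≃ₗ[ZMod 2]
      ((Fin p → ZMod 2) × (Fin (n - t - p) → ZMod 2) × (Fin t → ZMod 2)))
    (hl₂₃ : ∀ x, l₂₃ x = (b₁ x.1, b₂ x.2.1, b₃ x.2.2))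
    -- the block-diagonal endomorphism `l₁₄` with blocks `c₁, c₂, c₃`
    (c₁ : (Fin p → ZMod 2) →ₗ[ZMod 2] (Fin p → ZMod 2))
    (c₂ : (Fin (n - t - p) → ZMod 2) →ₗ[ZMod 2] (Fin (n - t - p) → ZMod 2))
    (c₃ : (Fin t → ZMod 2) →ₗ[ZMod 2] (Fin t → ZMod 2))
    (l₁₄ : ((Fin p → ZMod 2) × (Fin (n - t - p) → ZMod 2) × (Fin t → ZMod 2)) →ₗ[ZMod 2]
      ((Fin p → ZMod 2) × (Fin (n - t - p) → ZMod 2) × (Fin t → ZMod 2)))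
    (hl₁₄ : ∀ x, l₁₄ x = (c₁ x.1, c₂ x.2.1, c₃ x.2.2))
    -- the block-diagonal endomorphism `l₂₄` with blocks `d₁, d₂, d₃`
    (d₁ : (Fin p → ZMod 2) →ₗ[ZMod 2] (Fin p → ZMod 2))
    (d₂ : (Fin (n - t - p) → ZMod 2) →ₗ[ZMod 2] (Fin (n - t - p) → ZMod 2))
    (d₃ : (Fin t → ZMod 2) →ₗ[ZMod 2] (Fin t → ZMod 2))
    (l₂₄ : ((Fin p → ZMod 2) × (Fin (n - t - p) → ZMod 2) × (Fin t → ZMod 2)) →ₗ[ZMod 2]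
      ((Fin p → ZMod 2) × (Fin (n - t - p) → ZMod 2) × (Fin t → ZMod 2)))
    (hl₂₄ : ∀ x, l₂₄ x = (d₁ x.1, d₂ x.2.1, d₃ x.2.2))
    -- the TPP-PRF `g`
    (g : (Fin p → ZMod 2) × (Fin (n - t - p) → ZMod 2) × (Fin t → ZMod 2) →
      (Fin p → ZMod 2) × (Fin (n - t - p) → ZMod 2) × (Fin t → ZMod 2))
    (hg : ∀ x, g x = l₃₃ (P₁ (l₁₃ x + l₁₄ k₁)) + l₃₄ (P₂ (l₂₃ x + l₂₄ k₂))
      + e x + C)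
    -- the components of the secret states
    (s₁ : Fin p → ZMod 2) (s₂ : Fin (n - t - p) → ZMod 2) (s₃ : Fin t → ZMod 2)
    (hs : l₁₃.symm (l₁₄ k₁) = (s₁, s₂, s₃))
    (w₁ : Fin p → ZMod 2) (w₂ : Fin (n - t - p) → ZMod 2) (w₃ : Fin t → ZMod 2)
    (hw : l₂₃.symm (l₂₄ k₂) = (w₁, w₂, w₃))
    -- the truncated attack function `F^L`
    (FL : ((Fin p → ZMod 2) × (Fin (n - t - p) → ZMod 2)) × (Fin (n - t - p) → ZMod 2) →
      (Fin p → ZMod 2) →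
      (Fin p → ZMod 2) × (Fin (n - t - p) → ZMod 2) × (Fin t → ZMod 2))
    (hFL : ∀ i₁ i₂ j y, FL ((i₁, i₂), j) y =
      ∑ u : Fin t → ZMod 2,
        (g (y, 0, u) + e (y, 0, u) + l₃₃ (P₁ (l₁₃ (y, j, u)))
          + l₃₄ (P₂ (l₂₃ ((y, (0 : Fin (n - t - p) → ZMod 2), u)
              + (i₁, i₂, (0 : Fin t → ZMod 2)))))))
    (i₁ : Fin p → ZMod 2) (i₂ j : Fin (n - t - p) → ZMod 2)
    (hi : i₁ = w₁ ∧ i₂ = w₂) (hj : j = s₂) :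
    ∀ y : Fin p → ZMod 2, FL ((i₁, i₂), j) (y + s₁) = FL ((i₁, i₂), j) y :=
  tpp_prf_truncated_period_general P₁ P₂ l₃₃ l₃₄ e C k₁ k₂ l₁₃ l₂₃ l₁₄ l₂₄ g hg s₁ s₂ s₃ hs w₁ w₂ w₃
    hw FL hFL i₁ i₂ j hi hj
end

section
/- Let V = 𝔽₂^n, let P₁, P₂ be permutations of V, and let k₁, k₂, k₃, k₄ ∈ V. Define XopEM(x) = P₁(x + k₁) + P₂(x + k₃) + k₂ + k₄ and f(i, x) = XopEM(x) + P₁(x) + P₂(x + i). If i = k₃ or i = k₁ + k₃, then f(i, ·) has period k₁, i.e. f(i, x + k₁) = f(i, x) for every x ∈ V. -/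
/-!
Over `𝔽₂` we have `k₁ + k₁ = 0`, so for any map `g` the sum `g (x + k₁) + g x` is unchanged by
`x ↦ x + k₁`. When `i = k₃` the two `P₂`-terms of `f(i, ·)` cancel and only such a sum for `P₁`
(plus a constant) is left; when `i = k₁ + k₃` the `P₂`-terms form such a sum for `P₂ (· + k₃)`.
-/

open Function

theorem periodic_apply_add_add_apply {G M : Type*} [AddMonoid G] [AddCommMagma M] (g : G → M)
    {a : G} (ha : a + a = 0) : Periodic (fun x => g (x + a) + g x) a := fun x => by
  simp only [add_assoc, ha, add_zero]
  exact add_comm _ _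

section XopEM

variable {V : Type*} [AddCommGroup V] [Module (ZMod 2) V] (P₁ P₂ : V → V) (k₁ k₂ k₃ k₄ : V)

theorem periodic_xopEM_add_public_shift_k₃ :
    Periodic (fun x => P₁ (x + k₁) + P₂ (x + k₃) + k₂ + k₄ + P₁ x + P₂ (x + k₃)) k₁ := by
  have hP₁ := periodic_apply_add_add_apply P₁ (ZModModule.add_self k₁)
  have h (x : V) : P₁ (x + k₁) + P₂ (x + k₃) + k₂ + k₄ + P₁ x + P₂ (x + k₃) =
      P₁ (x + k₁) + P₁ x + (k₂ + k₄) := by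
    rw [← ZModModule.sub_eq_add _ (P₂ (x + k₃))]
    abel
  intro x
  simp only [h]
  exact congrArg (· + (k₂ + k₄)) (hP₁ x)

theorem periodic_xopEM_add_public_shift_k₁_add_k₃ :
    Periodic (fun x => P₁ (x + k₁) + P₂ (x + k₃) + k₂ + k₄ + P₁ x + P₂ (x + (k₁ + k₃))) k₁ := by
  have hk₁ := ZModModule.add_self k₁
  have hP₁ := periodic_apply_add_add_apply P₁ hk₁
  have hP₂ := (periodic_apply_add_add_apply P₂ hk₁).add_const k₃
  have h (x : V) : P₁ (x + k₁) + P₂ (x + k₃) + k₂ + k₄ + P₁ x + P₂ (x + (k₁ + k₃)) =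
      P₁ (x + k₁) + P₁ x + (P₂ (x + k₃ + k₁) + P₂ (x + k₃)) + (k₂ + k₄) := by
    rw [add_comm k₁ k₃, ← add_assoc]
    abel
  intro x
  simp only [h]
  exact congrArg (· + (k₂ + k₄)) ((hP₁.add hP₂) x)

end XopEM

/-- The p-XOR-type function `f(i, x) = XopEM(x) + P₁(x) + P₂(x + i)` built from
`XopEM(x) = P₁(x + k₁) + P₂(x + k₃) + k₂ + k₄` has period `k₁` when `i = k₃`
or `i = k₁ + k₃`. -/
theorem xopEM_p_xor_type_period
    {n : ℕ}
    (P₁ P₂ : Equiv.Perm (Fin n → ZMod 2))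
    (k₁ k₂ k₃ k₄ : Fin n → ZMod 2)
    (XopEM : (Fin n → ZMod 2) → (Fin n → ZMod 2))
    (hX : ∀ x, XopEM x = P₁ (x + k₁) + P₂ (x + k₃) + k₂ + k₄)
    (f : (Fin n → ZMod 2) → (Fin n → ZMod 2) → (Fin n → ZMod 2))
    (hf : ∀ i x, f i x = XopEM x + P₁ x + P₂ (x + i))
    (i : Fin n → ZMod 2) (hi : i = k₃ ∨ i = k₁ + k₃) :
    ∀ x : Fin n → ZMod 2, f i (x + k₁) = f i x := by
  have hfi : f i = fun x => P₁ (x + k₁) + P₂ (x + k₃) + k₂ + k₄ + P₁ x + P₂ (x + i) := by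
    funext x; rw [hf, hX]
  show Periodic (f i) k₁
  rw [hfi]
  rcases hi with rfl | rfl
  · exact periodic_xopEM_add_public_shift_k₃ P₁ P₂ k₁ k₂ i k₄
  · exact periodic_xopEM_add_public_shift_k₁_add_k₃ P₁ P₂ k₁ k₂ k₃ k₄
end

section
/- Let V = 𝔽₂^n, let P₁, P₂ be permutations of V, and let k₁, k₂ ∈ V. Define SoEM22(x) = P₁(x + k₁) + P₂(x + k₂) + k₁ + k₂ and f(i, x) = SoEM22(x) + P₁(x) + P₂(x + i). If i = k₂ or i = k₁ + k₂, then f(i, ·) has period k₁, i.e. f(i, x + k₁) = f(i, x) for every x ∈ V. -/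
/-!
Both `P₁` and `P₂` enter `f(i, ·)` through sums of the form `g y + g (y + k₁)`, which are
`k₁`-periodic because translation by `k₁` is an involution of `𝔽₂ⁿ`. Concretely,
`f(i, x) = (P₁ x + P₁ (x + k₁)) + (P₂ (x + k₂) + P₂ (x + i)) + (k₁ + k₂)`; for `i = k₁ + k₂` the
middle term has this shape with `y = x + k₂`, and for `i = k₂` it vanishes.
-/

open Function

theorem Function.periodic_add_apply_add {G M : Type*} [AddGroup G] [AddCommSemigroup M]
    (g : G → M) {k : G} (hk : k + k = 0) : Periodic (fun x => g x + g (x + k)) k := fun x => by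
  simp only [add_assoc, hk, add_zero, add_comm (g (x + k))]

/-- The p-XOR-type function `f(i, x) = SoEM22(x) + P₁(x) + P₂(x + i)` built from
`SoEM22(x) = P₁(x + k₁) + P₂(x + k₂) + k₁ + k₂` has period `k₁` when `i = k₂`
or `i = k₁ + k₂`. -/
theorem soEM22_p_xor_type_period
    {n : ℕ}
    (P₁ P₂ : Equiv.Perm (Fin n → ZMod 2))
    (k₁ k₂ : Fin n → ZMod 2)
    (SoEM22 : (Fin n → ZMod 2) → (Fin n → ZMod 2))
    (hS : ∀ x, SoEM22 x = P₁ (x + k₁) + P₂ (x + k₂) + k₁ + k₂)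
    (f : (Fin n → ZMod 2) → (Fin n → ZMod 2) → (Fin n → ZMod 2))
    (hf : ∀ i x, f i x = SoEM22 x + P₁ x + P₂ (x + i))
    (i : Fin n → ZMod 2) (hi : i = k₂ ∨ i = k₁ + k₂) :
    ∀ x : Fin n → ZMod 2, f i (x + k₁) = f i x := by
  have add_self : ∀ v : Fin n → ZMod 2, v + v = 0 := fun v =>
    funext fun j => CharTwo.add_self_eq_zero (v j)
  have hfi : f i = fun x => (P₁ x + P₁ (x + k₁)) + (P₂ (x + k₂) + P₂ (x + i)) + (k₁ + k₂) := by
    funext x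
    rw [hf, hS]
    abel
  have hP₂ : Periodic (fun x => P₂ (x + k₂) + P₂ (x + i)) k₁ := by
    rcases hi with rfl | rfl
    · simp only [add_self]
      exact fun _ => rfl
    · simpa only [add_comm k₁ k₂, ← add_assoc] using
        (periodic_add_apply_add P₂ (add_self k₁)).add_const k₂
  rw [hfi]
  have hconst : Periodic (fun _ => k₁ + k₂) k₁ := fun _ => rfl
  exact ((periodic_add_apply_add P₁ (add_self k₁)).add hP₂).add hconst
end

section
/- Fix n > d ≥ 1 and identify 𝔽₂^n with 𝔽₂^{n−d} × 𝔽₂^{d}. Let P be a permutation of 𝔽₂^{n−d} × 𝔽₂^{d}, let k₁, k₂ ∈ 𝔽₂^n have most-significant parts a = msb_{n−d}(k₁), b = msb_{n−d}(k₂) ∈ 𝔽₂^{n−d}, and define DS-SoEM(x) = P(x + a, 0) + P(x + b, 1) + k₁ + k₂ for x ∈ 𝔽₂^{n−d}, where 0 and 1 denote the all-zeros and all-ones vectors of 𝔽₂^{d}. Define f(i, x) = DS-SoEM(x) + P(x, 0) + P(x + i, 1). If i = b, then f(i, ·) has period a, i.e. f(i, x + a) = f(i, x) for every x ∈ 𝔽₂^{n−d}.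 -/
/-!
For `i = b` the two `P (x + b, 1)` terms cancel in characteristic two, so
`f b x = P (x + a, 0) + P (x, 0) + k₁ + k₂`, which is symmetric under `x ↦ x + a`
because `a + a = 0`.
-/

theorem Function.periodic_comp_add_add_of_add_self_eq_zero {V W : Type*} [AddMonoid V]
    [AddCommMagma W] (g : V → W) {a : V} (ha : a + a = 0) :
    Function.Periodic (fun x => g (x + a) + g x) a := by
  intro x
  simp only [add_assoc, ha, add_zero]
  exact add_comm _ _

theorem ds_soEM_p_xor_type_period_general
    {n d : ℕ}
    (P : Equiv.Perm ((Fin (n - d) → ZMod 2) × (Fin d → ZMod 2)))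
    (k₁ k₂ : (Fin (n - d) → ZMod 2) × (Fin d → ZMod 2))
    (a b : Fin (n - d) → ZMod 2)
    (DSSoEM : (Fin (n - d) → ZMod 2) →
      (Fin (n - d) → ZMod 2) × (Fin d → ZMod 2))
    (hDS : ∀ x, DSSoEM x =
      P (x + a, (0 : Fin d → ZMod 2)) + P (x + b, fun _ => 1) + k₁ + k₂)
    (f : (Fin (n - d) → ZMod 2) → (Fin (n - d) → ZMod 2) →
      (Fin (n - d) → ZMod 2) × (Fin d → ZMod 2))
    (hf : ∀ i x, f i x = DSSoEM x + P (x, (0 : Fin d → ZMod 2))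
      + P (x + i, fun _ => 1))
    (i : Fin (n - d) → ZMod 2) (hi : i = b) :
    ∀ x : Fin (n - d) → ZMod 2, f i (x + a) = f i x := by
  have hcancel : ∀ y, f b y = P (y + a, 0) + P (y, 0) + (k₁ + k₂) := fun y => by
    rw [hf, hDS]
    linear_combination ZModModule.add_self (P (y + b, fun _ => 1))
  intro x
  rw [hi, hcancel, hcancel]
  exact congrArg (· + (k₁ + k₂)) <|
    Function.periodic_comp_add_add_of_add_self_eq_zero (fun y => P (y, 0))
      (ZModModule.add_self a) x

/-- The p-XOR-type function `f(i, x) = DS-SoEM(x) + P(x, 0) + P(x + i, 1)` built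
from the domain-separated Sum-of-Even-Mansour cipher
`DS-SoEM(x) = P(x + a, 0) + P(x + b, 1) + k₁ + k₂`, where
`a = msb_{n-d}(k₁)` and `b = msb_{n-d}(k₂)`, has period `a` when `i = b`. -/
theorem ds_soEM_p_xor_type_period
    {n d : ℕ} (hd : 1 ≤ d) (hdn : d < n)
    (P : Equiv.Perm ((Fin (n - d) → ZMod 2) × (Fin d → ZMod 2)))
    (k₁ k₂ : (Fin (n - d) → ZMod 2) × (Fin d → ZMod 2))
    (a b : Fin (n - d) → ZMod 2) (ha : a = k₁.1) (hb : b = k₂.1)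
    (DSSoEM : (Fin (n - d) → ZMod 2) →
      (Fin (n - d) → ZMod 2) × (Fin d → ZMod 2))
    (hDS : ∀ x, DSSoEM x =
      P (x + a, (0 : Fin d → ZMod 2)) + P (x + b, fun _ => 1) + k₁ + k₂)
    (f : (Fin (n - d) → ZMod 2) → (Fin (n - d) → ZMod 2) →
      (Fin (n - d) → ZMod 2) × (Fin d → ZMod 2))
    (hf : ∀ i x, f i x = DSSoEM x + P (x, (0 : Fin d → ZMod 2))
      + P (x + i, fun _ => 1))
    (i : Fin (n - d) → ZMod 2) (hi : i = b) :
    ∀ x : Fin (n - d) → ZMod 2, f i (x + a) = f i x :=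
  ds_soEM_p_xor_type_period_general P k₁ k₂ a b DSSoEM hDS f hf i hi
end

section
/- Let V = V₁ × V₂ × V₃ with V₁ = 𝔽₂^p, V₂ = 𝔽₂^{n−t−p}, V₃ = 𝔽₂^{t}, let P₁, P₂ be permutations of V, and let k₁ = (k₁¹, k₁², k₁³), k₂, k₃ = (k₃¹, k₃², k₃³), k₄ ∈ V. Define XopEM(x) = P₁(x + k₁) + P₂(x + k₃) + k₂ + k₄, and for i = (i₁, i₂) ∈ V₁ × V₂, j ∈ V₂, y ∈ V₁ define F^L((i, j), y) = ∑_{u ∈ V₃} [ XopEM(y, 0, u) + P₁(y, j, u) + P₂(y + i₁, i₂, u) ]. If (i₁, i₂) = (k₃¹, k₃²) and j = k₁², then F^L((i, j), ·) has period k₁¹: F^L((i, j), y + k₁¹) = F^L((i, j), y) for every y ∈ V₁. -/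
/-!
Substituting the right guesses, the `P₂`-part of `XopEM(y, 0, u)` is `P₂(y + k₃¹, k₃², u + k₃³)`,
which after reindexing `u ↦ u + k₃³` cancels the `P₂`-term of `F^L` in characteristic two. What
remains is `S(y + k₁¹) + S(y)` plus a constant, where `S(z) = ∑_u P₁(z, k₁², u)`; this expression
is invariant under `y ↦ y + k₁¹` because `k₁¹ + k₁¹ = 0`.
-/

open Finset

section BlockSum

variable {V₁ V₂ V₃ M : Type*} [Fintype V₃]

def blockSum [AddCommMonoid M] (f : V₁ × V₂ × V₃ → M) (y : V₁) (j : V₂) : M :=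
  ∑ u, f (y, j, u)

variable [Add V₁] [AddZeroClass V₂] [AddGroup V₃]

theorem sum_apply_mk_zero_add [AddCommMonoid M] (f : V₁ × V₂ × V₃ → M) (k : V₁ × V₂ × V₃)
    (y : V₁) : ∑ u, f ((y, 0, u) + k) = blockSum f (y + k.1) k.2.1 := by
  obtain ⟨a, b, c⟩ := k
  simp only [Prod.mk_add_mk, zero_add, blockSum]
  exact Fintype.sum_equiv (Equiv.addRight c) _ _ fun _ => rfl

theorem sum_xopEM_attack_eq_blockSum_add_blockSum [AddCommGroup M] [Module (ZMod 2) M]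
    (P₁ P₂ : V₁ × V₂ × V₃ → M) (k₁ k₃ : V₁ × V₂ × V₃) (k : M) (XopEM : V₁ × V₂ × V₃ → M)
    (hX : ∀ x, XopEM x = P₁ (x + k₁) + P₂ (x + k₃) + k) (y : V₁) :
    ∑ u, (XopEM (y, 0, u) + P₁ (y, k₁.2.1, u) + P₂ (y + k₃.1, k₃.2.1, u)) =
      blockSum P₁ (y + k₁.1) k₁.2.1 + blockSum P₁ y k₁.2.1 + Fintype.card V₃ • k := by
  simp only [hX, sum_add_distrib, sum_apply_mk_zero_add, sum_const, card_univ]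
  change _ + blockSum P₁ y k₁.2.1 + blockSum P₂ (y + k₃.1) k₃.2.1 = _
  generalize blockSum P₂ (y + k₃.1) k₃.2.1 = s
  calc _ = blockSum P₁ (y + k₁.1) k₁.2.1 + blockSum P₁ y k₁.2.1 + Fintype.card V₃ • k
        + (s + s) := by abel
    _ = _ := by rw [ZModModule.add_self, add_zero]

end BlockSum

theorem Function.periodic_add_comp_add_self {A M : Type*} [AddCommGroup A] [Module (ZMod 2) A]
    [AddCommSemigroup M] (g : A → M) (a : A) (c : M) :
    Function.Periodic (fun y => g (y + a) + g y + c) a := fun y => by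
  simp only [add_assoc y a a, ZModModule.add_self, add_zero, add_comm (g y)]

/-- Truncated attack function for XopEM on `V = 𝔽₂^p × 𝔽₂^{n-t-p} × 𝔽₂^t`:
`F^L((i, j), y) = ∑_{u} [XopEM(y, 0, u) + P₁(y, j, u) + P₂(y + i₁, i₂, u)]`
has period `k₁¹` (the high `p` bits of `k₁`) when `(i₁, i₂) = (k₃¹, k₃²)`
and `j = k₁²`. -/
theorem xopEM_truncated_period
    {n t p : ℕ}
    (P₁ P₂ : Equiv.Perm
      ((Fin p → ZMod 2) × (Fin (n - t - p) → ZMod 2) × (Fin t → ZMod 2)))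
    (k₁ k₂ k₃ k₄ : (Fin p → ZMod 2) × (Fin (n - t - p) → ZMod 2) × (Fin t → ZMod 2))
    (k₁1 : Fin p → ZMod 2) (k₁2 : Fin (n - t - p) → ZMod 2) (k₁3 : Fin t → ZMod 2)
    (hk₁ : k₁ = (k₁1, k₁2, k₁3))
    (k₃1 : Fin p → ZMod 2) (k₃2 : Fin (n - t - p) → ZMod 2) (k₃3 : Fin t → ZMod 2)
    (hk₃ : k₃ = (k₃1, k₃2, k₃3))
    (XopEM : (Fin p → ZMod 2) × (Fin (n - t - p) → ZMod 2) × (Fin t → ZMod 2) →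
      (Fin p → ZMod 2) × (Fin (n - t - p) → ZMod 2) × (Fin t → ZMod 2))
    (hX : ∀ x, XopEM x = P₁ (x + k₁) + P₂ (x + k₃) + k₂ + k₄)
    (FL : ((Fin p → ZMod 2) × (Fin (n - t - p) → ZMod 2)) × (Fin (n - t - p) → ZMod 2) →
      (Fin p → ZMod 2) →
      (Fin p → ZMod 2) × (Fin (n - t - p) → ZMod 2) × (Fin t → ZMod 2))
    (hFL : ∀ i₁ i₂ j y, FL ((i₁, i₂), j) y =
      ∑ u : Fin t → ZMod 2,
        (XopEM (y, (0 : Fin (n - t - p) → ZMod 2), u) + P₁ (y, j, u)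
          + P₂ (y + i₁, i₂, u)))
    (i₁ : Fin p → ZMod 2) (i₂ j : Fin (n - t - p) → ZMod 2)
    (hi : i₁ = k₃1 ∧ i₂ = k₃2) (hj : j = k₁2) :
    ∀ y : Fin p → ZMod 2, FL ((i₁, i₂), j) (y + k₁1) = FL ((i₁, i₂), j) y := by
  obtain ⟨rfl, rfl⟩ := hi
  subst hj hk₁ hk₃
  have hF : FL ((i₁, i₂), j) = fun y => blockSum (⇑P₁) (y + k₁1) j + blockSum (⇑P₁) y j
      + Fintype.card (Fin t → ZMod 2) • (k₂ + k₄) :=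
    funext fun y => by
      rw [hFL]
      exact sum_xopEM_attack_eq_blockSum_add_blockSum P₁ P₂ (k₁1, j, k₁3) (i₁, i₂, k₃3)
        (k₂ + k₄) XopEM (fun x => by rw [hX, add_assoc]) y
  rw [hF]
  exact Function.periodic_add_comp_add_self (fun z => blockSum (⇑P₁) z j) k₁1 _
end

section
/- Let V = V₁ × V₂ × V₃ with V₁ = 𝔽₂^p, V₂ = 𝔽₂^{n−t−p}, V₃ = 𝔽₂^{t}, let P₁, P₂ be permutations of V, and let k₁ = (k₁¹, k₁², k₁³), k₂ = (k₂¹, k₂², k₂³) ∈ V. Define SoEM22(x) = P₁(x + k₁) + P₂(x + k₂) + k₁ + k₂, and for i = (i₁, i₂) ∈ V₁ × V₂, j ∈ V₂, y ∈ V₁ define F^L((i, j), y) = ∑_{u ∈ V₃} [ SoEM22(y, 0, u) + P₁(y, j, u) + P₂(y + i₁, i₂, u) ]. If (i₁, i₂) = (k₂¹, k₂²) and j = k₁², then F^L((i, j), ·) has period k₁¹: F^L((i, j), y + k₁¹) = F^L((i, j), y) for every y ∈ V₁. -/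
/-!
Summing over the low block absorbs the low parts of the keys, so, writing
`S(y) = ∑ᵤ P₁(y, k₁², u)`, the sum over the low block of `SoEM22(y, 0, u)` is
`S(y + k₁¹) + ∑ᵤ P₂(y + k₂¹, k₂², u) + 2ᵗ (k₁ + k₂)`. With the right guesses the two
`P₂` sums in `F^L` coincide and cancel in characteristic two, leaving
`F^L(y) = S(y + k₁¹) + S(y) + const`, which is invariant under `y ↦ y + k₁¹` because
`y + k₁¹ + k₁¹ = y`.
-/

open Finset Function

theorem sum_comp_mk_add {A B C M : Type*} [Add A] [Add B] [AddGroup C] [Fintype C]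
    [AddCommMonoid M] (f : A × B × C → M) (a : A) (b : B) (k : A × B × C) :
    ∑ u, f ((a, b, u) + k) = ∑ u, f (a + k.1, b + k.2.1, u) :=
  Equiv.sum_comp (Equiv.addRight k.2.2) (fun u ↦ f (a + k.1, b + k.2.1, u))

theorem periodic_comp_add_add_add_const {A M : Type*} [AddCommGroup A] [Module (ZMod 2) A]
    [AddCommMonoid M] (g : A → M) (k : A) (c : M) :
    Periodic (fun y ↦ g (y + k) + g y + c) k := by
  intro y
  simp only [add_assoc y k k, ZModModule.add_self, add_zero, add_comm (g (y + k))]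

/-- Truncated attack function for SoEM22 on `V = 𝔽₂^p × 𝔽₂^{n-t-p} × 𝔽₂^t`:
`F^L((i, j), y) = ∑_{u} [SoEM22(y, 0, u) + P₁(y, j, u) + P₂(y + i₁, i₂, u)]`
has period `k₁¹` (the high `p` bits of `k₁`) when `(i₁, i₂) = (k₂¹, k₂²)`
and `j = k₁²`. -/
theorem soEM22_truncated_period
    {n t p : ℕ}
    (P₁ P₂ : Equiv.Perm
      ((Fin p → ZMod 2) × (Fin (n - t - p) → ZMod 2) × (Fin t → ZMod 2)))
    (k₁ k₂ : (Fin p → ZMod 2) × (Fin (n - t - p) → ZMod 2) × (Fin t → ZMod 2))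
    (k₁1 : Fin p → ZMod 2) (k₁2 : Fin (n - t - p) → ZMod 2) (k₁3 : Fin t → ZMod 2)
    (hk₁ : k₁ = (k₁1, k₁2, k₁3))
    (k₂1 : Fin p → ZMod 2) (k₂2 : Fin (n - t - p) → ZMod 2) (k₂3 : Fin t → ZMod 2)
    (hk₂ : k₂ = (k₂1, k₂2, k₂3))
    (SoEM22 : (Fin p → ZMod 2) × (Fin (n - t - p) → ZMod 2) × (Fin t → ZMod 2) →
      (Fin p → ZMod 2) × (Fin (n - t - p) → ZMod 2) × (Fin t → ZMod 2))
    (hS : ∀ x, SoEM22 x = P₁ (x + k₁) + P₂ (x + k₂) + k₁ + k₂)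
    (FL : ((Fin p → ZMod 2) × (Fin (n - t - p) → ZMod 2)) × (Fin (n - t - p) → ZMod 2) →
      (Fin p → ZMod 2) →
      (Fin p → ZMod 2) × (Fin (n - t - p) → ZMod 2) × (Fin t → ZMod 2))
    (hFL : ∀ i₁ i₂ j y, FL ((i₁, i₂), j) y =
      ∑ u : Fin t → ZMod 2,
        (SoEM22 (y, (0 : Fin (n - t - p) → ZMod 2), u) + P₁ (y, j, u)
          + P₂ (y + i₁, i₂, u)))
    (i₁ : Fin p → ZMod 2) (i₂ j : Fin (n - t - p) → ZMod 2)
    (hi : i₁ = k₂1 ∧ i₂ = k₂2) (hj : j = k₁2) :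
    ∀ y : Fin p → ZMod 2, FL ((i₁, i₂), j) (y + k₁1) = FL ((i₁, i₂), j) y := by
  obtain ⟨rfl, rfl⟩ := hi
  subst hj hk₁ hk₂
  set S := fun y ↦ ∑ u, P₁ (y, j, u)
  set c := ∑ _u : Fin t → ZMod 2, (k₁1, j, k₁3) + ∑ _u : Fin t → ZMod 2, (i₁, i₂, k₂3)
  have hFL_eq : FL ((i₁, i₂), j) = fun y ↦ S (y + k₁1) + S y + c := by
    funext y
    set T := ∑ u, P₂ (y + i₁, i₂, u)
    calc FL ((i₁, i₂), j) y = S (y + k₁1) + T + c + S y + T := by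
          simp only [hFL, hS, sum_add_distrib, sum_comp_mk_add, zero_add, add_assoc,
            S, T, c]
      _ = S (y + k₁1) + T + c + S y - T := (ZModModule.sub_eq_add _ _).symm
      _ = S (y + k₁1) + S y + c := by abel
  exact hFL_eq ▸ periodic_comp_add_add_add_const S k₁1 c
end

section
/- Let V = V₁ × V₂ × V₃ with V₁ = 𝔽₂^p, V₂ = 𝔽₂^{n−t−p}, V₃ = 𝔽₂^{t}, let P be a permutation of V with inverse P⁻¹, and let k₁ = (k₁¹, k₁², k₁³), k₂ = (k₂¹, k₂², k₂³) ∈ V. Define SUMPIP(x) = P(x + k₁) + P⁻¹(x + k₂) + k₁ + k₂, and for i = (i₁, i₂) ∈ V₁ × V₂, j ∈ V₂, y ∈ V₁ define F^L((i, j), y) = ∑_{u ∈ V₃} [ SUMPIP(y, 0, u) + P(y, j, u) + P⁻¹(y + i₁, i₂, u) ]. If (i₁, i₂) = (k₂¹, k₂²) and j = k₁², then F^L((i, j), ·) has period k₁¹: F^L((i, j), y + k₁¹) = F^L((i, j), y) for every y ∈ V₁. -/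
/-!
An XOR-sum over the low block is invariant under translating that block, so summing
`SUMPIP(y, 0, u)` over `u` turns `P((y, 0, u) + k₁)` into `S(y + k₁¹)` with
`S(z) = ∑ᵤ P(z, k₁², u)`, and `P⁻¹((y, 0, u) + k₂)` into `∑ᵤ P⁻¹(y + k₂¹, k₂², u)`.
With the right guesses the latter cancels the `P⁻¹` term of `F^L` in characteristic 2,
the `P` term is `S(y)`, and `F^L(y) = S(y + k₁¹) + S(y) + const` is visibly invariant under `y ↦ y + k₁¹`.
-/

theorem Fintype.sum_prod_mk_add {A B C W : Type*} [Add A] [Add B] [AddGroup C] [Fintype C]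
    [AddCommMonoid W] (g : A × B × C → W) (a : A) (b : B) (z : A × B × C) :
    ∑ u : C, g ((a, b, u) + z) = ∑ u : C, g (a + z.1, b + z.2.1, u) :=
  Fintype.sum_equiv (Equiv.addRight z.2.2) _ _ fun _ => rfl

theorem Function.periodic_translate_add_add_const {A W : Type*} [AddCommGroup A]
    [Module (ZMod 2) A] [AddCommMonoid W] (S : A → W) (a : A) (c : W) :
    Function.Periodic (fun y => S (y + a) + S y + c) a := by
  intro y
  dsimp only
  rw [add_assoc y a a, ZModModule.add_self, add_zero, add_comm (S (y + a))]

/-- Truncated attack function for SUMPIP on `V = 𝔽₂^p × 𝔽₂^{n-t-p} × 𝔽₂^t`: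
`F^L((i, j), y) = ∑_{u} [SUMPIP(y, 0, u) + P(y, j, u) + P⁻¹(y + i₁, i₂, u)]`
has period `k₁¹` (the high `p` bits of `k₁`) when `(i₁, i₂) = (k₂¹, k₂²)`
and `j = k₁²`. -/
theorem sumpip_truncated_period
    {n t p : ℕ}
    (P : Equiv.Perm
      ((Fin p → ZMod 2) × (Fin (n - t - p) → ZMod 2) × (Fin t → ZMod 2)))
    (k₁ k₂ : (Fin p → ZMod 2) × (Fin (n - t - p) → ZMod 2) × (Fin t → ZMod 2))
    (k₁1 : Fin p → ZMod 2) (k₁2 : Fin (n - t - p) → ZMod 2) (k₁3 : Fin t → ZMod 2)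
    (hk₁ : k₁ = (k₁1, k₁2, k₁3))
    (k₂1 : Fin p → ZMod 2) (k₂2 : Fin (n - t - p) → ZMod 2) (k₂3 : Fin t → ZMod 2)
    (hk₂ : k₂ = (k₂1, k₂2, k₂3))
    (SUMPIP : (Fin p → ZMod 2) × (Fin (n - t - p) → ZMod 2) × (Fin t → ZMod 2) →
      (Fin p → ZMod 2) × (Fin (n - t - p) → ZMod 2) × (Fin t → ZMod 2))
    (hS : ∀ x, SUMPIP x = P (x + k₁) + P.symm (x + k₂) + k₁ + k₂)
    (FL : ((Fin p → ZMod 2) × (Fin (n - t - p) → ZMod 2)) × (Fin (n - t - p) → ZMod 2) →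
      (Fin p → ZMod 2) →
      (Fin p → ZMod 2) × (Fin (n - t - p) → ZMod 2) × (Fin t → ZMod 2))
    (hFL : ∀ i₁ i₂ j y, FL ((i₁, i₂), j) y =
      ∑ u : Fin t → ZMod 2,
        (SUMPIP (y, (0 : Fin (n - t - p) → ZMod 2), u) + P (y, j, u)
          + P.symm (y + i₁, i₂, u)))
    (i₁ : Fin p → ZMod 2) (i₂ j : Fin (n - t - p) → ZMod 2)
    (hi : i₁ = k₂1 ∧ i₂ = k₂2) (hj : j = k₁2) :
    ∀ y : Fin p → ZMod 2, FL ((i₁, i₂), j) (y + k₁1) = FL ((i₁, i₂), j) y := by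
  obtain ⟨rfl, rfl⟩ := hi
  subst hj hk₁ hk₂
  set S := fun z => ∑ u : Fin t → ZMod 2, P (z, j, u)
  set T := fun y => ∑ u : Fin t → ZMod 2, P.symm (y + i₁, i₂, u)
  set c := ∑ _u : Fin t → ZMod 2, ((k₁1, j, k₁3) + (i₁, i₂, k₂3))
  have hFL_eq : FL ((i₁, i₂), j) = fun y => S (y + k₁1) + S y + c := by
    funext y
    calc FL ((i₁, i₂), j) y = S (y + k₁1) + T y + c + S y + T y := by
          simp only [hFL, hS, Finset.sum_add_distrib, Fintype.sum_prod_mk_add, zero_add,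
            ← add_assoc, S, T, c]
      _ = S (y + k₁1) + S y + c + (T y + T y) := by abel
      _ = S (y + k₁1) + S y + c := by rw [ZModModule.add_self, add_zero]
  rw [hFL_eq]
  exact Function.periodic_translate_add_add_const S k₁1 c
end

section
/- Fix n > d ≥ 1 and identify 𝔽₂^{n−d} with V₁ × V₂ × V₃ where V₁ = 𝔽₂^p, V₂ = 𝔽₂^{n−d−t−p}, V₃ = 𝔽₂^{t}. Let P be a permutation of 𝔽₂^{n−d} × 𝔽₂^{d}, let k₁, k₂ ∈ 𝔽₂^n have most-significant parts a = msb_{n−d}(k₁) = (a¹, a², a³) and b = msb_{n−d}(k₂) = (b¹, b², b³) in 𝔽₂^{n−d}, and define DS-SoEM(x) = P(x + a, 0) + P(x + b, 1) + k₁ + k₂ for x ∈ 𝔽₂^{n−d}, where 0 and 1 denote the all-zeros and all-ones vectors of 𝔽₂^{d}. For i = (i₁, i₂) ∈ V₁ × V₂, j ∈ V₂, y ∈ V₁ define F^L((i, j), y) = ∑_{u ∈ V₃} [ DS-SoEM(y, 0, u) + P((y, j, u), 0) + P((y + i₁, i₂, u), 1) ]. If (i₁, i₂) = (b¹, b²)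 and j = a², then F^L((i, j), ·) has period a¹: F^L((i, j), y + a¹) = F^L((i, j), y) for every y ∈ V₁. -/
/-!
Writing `A c = ∑ u, P ((c, a², u), 0)` and `B c = ∑ u, P ((c, b², u), 1)`, the substitution
`u ↦ u + a³` (resp. `u ↦ u + b³`) turns the two DS-SoEM terms of `F^L` into `A (y + a¹)` and
`B (y + b¹)`. With the right guesses the other two terms are `A y` and `B (y + b¹)`, so over `𝔽₂`
the `B`s cancel and `F^L(y) = A (y + a¹) + A y + const`, which is visibly `a¹`-periodic.
-/

open Finset

theorem periodic_apply_add_add_apply_s13 {G M : Type*} [AddCommGroup G] [Module (ZMod 2) G]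
    [AddCommSemigroup M] (f : G → M) (a : G) :
    Function.Periodic (fun y => f (y + a) + f y) a := by
  intro y
  show f (y + a + a) + f (y + a) = f (y + a) + f y
  rw [add_assoc y a a, ZModModule.add_self, add_zero, add_comm]

section TruncatedSum

variable {V₁ V₂ V₃ W : Type*} [AddCommGroup V₁] [AddZeroClass V₂] [AddGroup V₃] [Fintype V₃]
  [AddCommGroup W]

theorem sum_apply_mk_zero_add_s13 (Q : V₁ × V₂ × V₃ → W) (y : V₁) (a : V₁ × V₂ × V₃) :
    ∑ u, Q ((y, 0, u) + a) = ∑ u, Q (y + a.1, a.2.1, u) :=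
  Fintype.sum_equiv (Equiv.addRight a.2.2) _ _ fun u => by simp [Prod.add_def]

variable [Module (ZMod 2) W]

theorem sum_truncated_eq_s13 (Q₀ Q₁ E : V₁ × V₂ × V₃ → W) (k : W) (a b : V₁ × V₂ × V₃)
    (hE : ∀ x, E x = Q₀ (x + a) + Q₁ (x + b) + k) (y : V₁) :
    ∑ u, (E (y, 0, u) + Q₀ (y, a.2.1, u) + Q₁ (y + b.1, b.2.1, u)) =
      ∑ u, Q₀ (y + a.1, a.2.1, u) + ∑ u, Q₀ (y, a.2.1, u) + Fintype.card V₃ • k := by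
  simp only [hE, sum_add_distrib, sum_apply_mk_zero_add_s13, sum_const, card_univ]
  linear_combination (norm := module) ZModModule.add_self (∑ u, Q₁ (y + b.1, b.2.1, u))

variable [Module (ZMod 2) V₁] in
theorem periodic_sum_truncated (Q₀ Q₁ E : V₁ × V₂ × V₃ → W) (k : W) (a b : V₁ × V₂ × V₃)
    (hE : ∀ x, E x = Q₀ (x + a) + Q₁ (x + b) + k) :
    Function.Periodic
      (fun y => ∑ u, (E (y, 0, u) + Q₀ (y, a.2.1, u) + Q₁ (y + b.1, b.2.1, u))) a.1 := by
  intro y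
  simp only [sum_truncated_eq_s13 Q₀ Q₁ E k a b hE]
  exact congrArg (· + _) (periodic_apply_add_add_apply_s13 (fun c => ∑ u, Q₀ (c, a.2.1, u)) a.1 y)

end TruncatedSum

theorem ds_soEM_truncated_period_general
    {n d t p : ℕ}
    (P : Equiv.Perm
      (((Fin p → ZMod 2) × (Fin (n - d - t - p) → ZMod 2) × (Fin t → ZMod 2))
        × (Fin d → ZMod 2)))
    (k₁ k₂ : ((Fin p → ZMod 2) × (Fin (n - d - t - p) → ZMod 2) × (Fin t → ZMod 2))
        × (Fin d → ZMod 2))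
    (a b : (Fin p → ZMod 2) × (Fin (n - d - t - p) → ZMod 2) × (Fin t → ZMod 2))
    (a₁ : Fin p → ZMod 2) (a₂ : Fin (n - d - t - p) → ZMod 2) (a₃ : Fin t → ZMod 2)
    (hacomp : a = (a₁, a₂, a₃))
    (b₁ : Fin p → ZMod 2) (b₂ : Fin (n - d - t - p) → ZMod 2) (b₃ : Fin t → ZMod 2)
    (hbcomp : b = (b₁, b₂, b₃))
    (DSSoEM : ((Fin p → ZMod 2) × (Fin (n - d - t - p) → ZMod 2) × (Fin t → ZMod 2)) →
      ((Fin p → ZMod 2) × (Fin (n - d - t - p) → ZMod 2) × (Fin t → ZMod 2))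
        × (Fin d → ZMod 2))
    (hDS : ∀ x, DSSoEM x =
      P (x + a, (0 : Fin d → ZMod 2)) + P (x + b, fun _ => 1) + k₁ + k₂)
    (FL : ((Fin p → ZMod 2) × (Fin (n - d - t - p) → ZMod 2))
        × (Fin (n - d - t - p) → ZMod 2) →
      (Fin p → ZMod 2) →
      ((Fin p → ZMod 2) × (Fin (n - d - t - p) → ZMod 2) × (Fin t → ZMod 2))
        × (Fin d → ZMod 2))
    (hFL : ∀ i₁ i₂ j y, FL ((i₁, i₂), j) y =
      ∑ u : Fin t → ZMod 2,
        (DSSoEM (y, (0 : Fin (n - d - t - p) → ZMod 2), u)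
          + P ((y, j, u), (0 : Fin d → ZMod 2))
          + P ((y + i₁, i₂, u), fun _ => 1)))
    (i₁ : Fin p → ZMod 2) (i₂ j : Fin (n - d - t - p) → ZMod 2)
    (hi : i₁ = b₁ ∧ i₂ = b₂) (hj : j = a₂) :
    ∀ y : Fin p → ZMod 2, FL ((i₁, i₂), j) (y + a₁) = FL ((i₁, i₂), j) y := by
  obtain ⟨rfl, rfl⟩ := hi
  subst hj hacomp hbcomp
  intro y
  rw [hFL, hFL]
  exact periodic_sum_truncated (fun x => P (x, 0)) (fun x => P (x, fun _ => 1)) DSSoEM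
    (k₁ + k₂) (a₁, j, a₃) (i₁, i₂, b₃) (fun x => by rw [hDS, add_assoc _ k₁]) y

/-- Truncated attack function for DS-SoEM, with
`𝔽₂^{n-d} = 𝔽₂^p × 𝔽₂^{n-d-t-p} × 𝔽₂^t`:
`F^L((i, j), y) = ∑_{u} [DS-SoEM(y, 0, u) + P((y, j, u), 0) + P((y + i₁, i₂, u), 1)]`
has period `a¹` (the high `p` bits of `a = msb_{n-d}(k₁)`) when
`(i₁, i₂) = (b¹, b²)` and `j = a²`, where `b = msb_{n-d}(k₂)`. -/
theorem ds_soEM_truncated_period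
    {n d t p : ℕ} (hd : 1 ≤ d) (hdn : d < n)
    (P : Equiv.Perm
      (((Fin p → ZMod 2) × (Fin (n - d - t - p) → ZMod 2) × (Fin t → ZMod 2))
        × (Fin d → ZMod 2)))
    (k₁ k₂ : ((Fin p → ZMod 2) × (Fin (n - d - t - p) → ZMod 2) × (Fin t → ZMod 2))
        × (Fin d → ZMod 2))
    (a b : (Fin p → ZMod 2) × (Fin (n - d - t - p) → ZMod 2) × (Fin t → ZMod 2))
    (ha : a = k₁.1) (hb : b = k₂.1)
    (a₁ : Fin p → ZMod 2) (a₂ : Fin (n - d - t - p) → ZMod 2) (a₃ : Fin t → ZMod 2)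
    (hacomp : a = (a₁, a₂, a₃))
    (b₁ : Fin p → ZMod 2) (b₂ : Fin (n - d - t - p) → ZMod 2) (b₃ : Fin t → ZMod 2)
    (hbcomp : b = (b₁, b₂, b₃))
    (DSSoEM : ((Fin p → ZMod 2) × (Fin (n - d - t - p) → ZMod 2) × (Fin t → ZMod 2)) →
      ((Fin p → ZMod 2) × (Fin (n - d - t - p) → ZMod 2) × (Fin t → ZMod 2))
        × (Fin d → ZMod 2))
    (hDS : ∀ x, DSSoEM x =
      P (x + a, (0 : Fin d → ZMod 2)) + P (x + b, fun _ => 1) + k₁ + k₂)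
    (FL : ((Fin p → ZMod 2) × (Fin (n - d - t - p) → ZMod 2))
        × (Fin (n - d - t - p) → ZMod 2) →
      (Fin p → ZMod 2) →
      ((Fin p → ZMod 2) × (Fin (n - d - t - p) → ZMod 2) × (Fin t → ZMod 2))
        × (Fin d → ZMod 2))
    (hFL : ∀ i₁ i₂ j y, FL ((i₁, i₂), j) y =
      ∑ u : Fin t → ZMod 2,
        (DSSoEM (y, (0 : Fin (n - d - t - p) → ZMod 2), u)
          + P ((y, j, u), (0 : Fin d → ZMod 2))
          + P ((y + i₁, i₂, u), fun _ => 1)))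
    (i₁ : Fin p → ZMod 2) (i₂ j : Fin (n - d - t - p) → ZMod 2)
    (hi : i₁ = b₁ ∧ i₂ = b₂) (hj : j = a₂) :
    ∀ y : Fin p → ZMod 2, FL ((i₁, i₂), j) (y + a₁) = FL ((i₁, i₂), j) y :=
  ds_soEM_truncated_period_general P k₁ k₂ a b a₁ a₂ a₃ hacomp b₁ b₂ b₃ hbcomp DSSoEM hDS FL hFL i₁
    i₂ j hi hj
end
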